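/- arXiv:1507.08690 — 2 statements merged into one kernel-verified Lean document; each statement's English description precedes it below -/
import Mathlib

section
/- Let n ≥ 2 be an even integer, let x_1, …, x_n be positive integers, and let t be a positive integer. Then there exists a path in the hour-glass structure built from x_1, …, x_n whose sum equals t if and only if there exists a subset S' ⊆ {1, …, n} with ∑_{i ∈ S'} x_i = t. -/
/-!
Only the odd rows `2i - 1` carry values, and a path collects `x i` exactly when it visits column
`n - 1` on row `2i - 1`. Since `n` is even, the central column `n` is valid on every even row, so a
path can return there after each odd row and choose independently, for every `i`, between the
columns `n - 1` and `n + 1` on row `2i - 1`; these paths realise exactly the subset sums.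
-/

/-- A cell `(r, c)` of the hour-glass structure (with parameter `n`) is valid if
`c ≡ r (mod 2)` and `|c - n| ≤ |r - n|`. -/
def HGValid (n r : ℕ) (c : ℤ) : Prop :=
  c % 2 = (r : ℤ) % 2 ∧ |c - (n : ℤ)| ≤ |(r : ℤ) - (n : ℤ)|

/-- The value of the cell `(r, c)`: it is `x i` when `r = 2*i - 1` for some
`i ∈ {1, …, n}` (i.e. `r` is odd, `1 ≤ r ≤ 2n-1`, and `i = (r+1)/2`) and `c = n - 1`;
otherwise it is `0`. -/
def hgValue (n : ℕ) (x : ℕ → ℕ) (r : ℕ) (c : ℤ) : ℕ :=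
  if r % 2 = 1 ∧ 1 ≤ r ∧ r ≤ 2 * n - 1 ∧ c = (n : ℤ) - 1 then x ((r + 1) / 2) else 0

/-- A path assigns to every row `r ∈ {1, …, 2n-1}` a column `c r` such that each
cell `(r, c r)` is valid and consecutive columns differ by exactly `1`. -/
def IsHGPath (n : ℕ) (c : ℕ → ℤ) : Prop :=
  (∀ r, 1 ≤ r → r ≤ 2 * n - 1 → HGValid n r (c r)) ∧
  (∀ r, 1 ≤ r → r < 2 * n - 1 → |c (r + 1) - c r| = 1)

/-- The sum of the values along a path. -/
def hgSum (n : ℕ) (x : ℕ → ℕ) (c : ℕ → ℤ) : ℕ :=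
  ∑ r ∈ Finset.Icc 1 (2 * n - 1), hgValue n x r (c r)

lemma hgSum_eq_sum_filter (n : ℕ) (x : ℕ → ℕ) (c : ℕ → ℤ) :
    hgSum n x c = ∑ i ∈ Finset.Icc 1 n with c (2 * i - 1) = n - 1, x i := by
  rw [Finset.sum_filter, hgSum,
    ← Finset.sum_filter_of_ne (p := fun r => r % 2 = 1) fun r _ h => by
      by_contra hr; simp [hgValue, hr] at h]
  refine Finset.sum_nbij' (fun r => (r + 1) / 2) (fun i => 2 * i - 1) ?_ ?_ ?_ ?_ ?_ <;>
    simp only [Finset.mem_filter, Finset.mem_Icc]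
  iterate 4 omega
  intro r ⟨⟨hr1, hr2⟩, hodd⟩
  rw [show 2 * ((r + 1) / 2) - 1 = r by omega]
  simp [hgValue, hodd, hr1, hr2]

def subsetPathOffset (S : Finset ℕ) (r : ℕ) : ℤ :=
  if Even r then 0 else if (r + 1) / 2 ∈ S then -1 else 1

def subsetPath (n : ℕ) (S : Finset ℕ) (r : ℕ) : ℤ :=
  n + subsetPathOffset S r

lemma abs_subsetPathOffset_of_odd (S : Finset ℕ) {r : ℕ} (hr : Odd r) :
    |subsetPathOffset S r| = 1 := by
  rw [subsetPathOffset, if_neg (Nat.not_even_iff_odd.mpr hr)]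
  split_ifs <;> simp

lemma hgValid_subsetPath {n : ℕ} (hn : Even n) (S : Finset ℕ) (r : ℕ) :
    HGValid n r (subsetPath n S r) := by
  obtain hr | hr := Nat.even_or_odd r
  · refine ⟨?_, by simp [subsetPath, subsetPathOffset, hr]⟩
    simp only [subsetPath, subsetPathOffset, hr, if_true, add_zero]
    have := Nat.even_iff.mp hn
    have := Nat.even_iff.mp hr
    omega
  · have hoff := abs_subsetPathOffset_of_odd S hr
    have hrn : (r : ℤ) ≠ n := by
      exact_mod_cast fun h : r = n => Nat.not_even_iff_odd.mpr hr (h ▸ hn)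
    refine ⟨?_, ?_⟩
    · have := Nat.even_iff.mp hn
      have := Nat.odd_iff.mp hr
      rcases abs_eq (zero_le_one' ℤ) |>.mp hoff with h | h <;>
        simp only [subsetPath, h] <;> omega
    · simpa [subsetPath, hoff] using Int.one_le_abs (sub_ne_zero.mpr hrn)

lemma abs_subsetPath_succ_sub (n : ℕ) (S : Finset ℕ) (r : ℕ) :
    |subsetPath n S (r + 1) - subsetPath n S r| = 1 := by
  obtain hr | hr := Nat.even_or_odd r
  · have hoff := abs_subsetPathOffset_of_odd S (Even.add_one hr)
    simpa [subsetPath, subsetPathOffset, hr] using hoff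
  · have hoff := abs_subsetPathOffset_of_odd S hr
    simpa [subsetPath, subsetPathOffset, hr.add_one, abs_neg] using hoff

lemma isHGPath_subsetPath {n : ℕ} (hn : Even n) (S : Finset ℕ) : IsHGPath n (subsetPath n S) :=
  ⟨fun r _ _ => hgValid_subsetPath hn S r, fun r _ _ => abs_subsetPath_succ_sub n S r⟩

lemma subsetPath_two_mul_sub_one_eq_iff (n : ℕ) (S : Finset ℕ) {i : ℕ} (hi : 1 ≤ i) :
    subsetPath n S (2 * i - 1) = n - 1 ↔ i ∈ S := by
  have hodd : ¬Even (2 * i - 1) := by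
    rw [Nat.not_even_iff_odd]; exact Nat.Even.sub_odd (by omega) (even_two_mul i) odd_one
  rw [subsetPath, subsetPathOffset, if_neg hodd, show (2 * i - 1 + 1) / 2 = i by omega]
  split_ifs with h <;> simp [h] <;> omega

lemma hgSum_subsetPath (n : ℕ) (x : ℕ → ℕ) {S : Finset ℕ} (hS : S ⊆ Finset.Icc 1 n) :
    hgSum n x (subsetPath n S) = ∑ i ∈ S, x i := by
  rw [hgSum_eq_sum_filter]
  congr 1
  ext i
  simp only [Finset.mem_filter]
  constructor
  · rintro ⟨hi, h⟩
    exact (subsetPath_two_mul_sub_one_eq_iff n S (Finset.mem_Icc.mp hi).1).mp h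
  · intro hi
    have hi' := hS hi
    exact ⟨hi', (subsetPath_two_mul_sub_one_eq_iff n S (Finset.mem_Icc.mp hi').1).mpr hi⟩

theorem hourglass_path_iff_subset_sum_general
    (n : ℕ) (hneven : Even n)
    (x : ℕ → ℕ)
    (t : ℕ) :
    (∃ c : ℕ → ℤ, IsHGPath n c ∧ hgSum n x c = t) ↔
      (∃ S' ⊆ Finset.Icc 1 n, ∑ i ∈ S', x i = t) := by
  constructor
  · rintro ⟨c, -, rfl⟩
    exact ⟨_, Finset.filter_subset _ _, (hgSum_eq_sum_filter n x c).symm⟩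
  · rintro ⟨S, hS, rfl⟩
    exact ⟨subsetPath n S, isHGPath_subsetPath hneven S, hgSum_subsetPath n x hS⟩

/-- For even `n ≥ 2`, positive integers `x₁, …, xₙ` and a positive
target `t`, there is a path in the hour-glass structure whose sum equals `t`
iff some subset `S' ⊆ {1, …, n}` satisfies `∑_{i ∈ S'} x i = t`. -/
theorem hourglass_path_iff_subset_sum
    (n : ℕ) (hn : 2 ≤ n) (hneven : Even n)
    (x : ℕ → ℕ) (hx : ∀ i, 1 ≤ i → i ≤ n → 0 < x i)
    (t : ℕ) (ht : 0 < t) :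
    (∃ c : ℕ → ℤ, IsHGPath n c ∧ hgSum n x c = t) ↔
      (∃ S' ⊆ Finset.Icc 1 n, ∑ i ∈ S', x i = t) :=
  hourglass_path_iff_subset_sum_general n hneven x t
end

section
/- A finite nonempty connected set S ⊆ ℤ × ℤ has perimeter 6 if and only if S consists of exactly two adjacent cells (a domino). -/
/-- Two cells of `ℤ × ℤ` are adjacent if `|c₁ - d₁| + |c₂ - d₂| = 1`. -/
def Adj (c d : ℤ × ℤ) : Prop :=
  |c.1 - d.1| + |c.2 - d.2| = 1

/-- The perimeter of a finite set `S ⊆ ℤ × ℤ`: the number of ordered pairs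
`(c, d)` with `c ∈ S`, `d ∉ S`, and `c, d` adjacent. -/
noncomputable def perimeter (S : Finset (ℤ × ℤ)) : ℕ :=
  Set.ncard {p : (ℤ × ℤ) × (ℤ × ℤ) | p.1 ∈ S ∧ p.2 ∉ S ∧ Adj p.1 p.2}

/-- A finite set `S ⊆ ℤ × ℤ` is connected if any two of its cells are joined by a
finite sequence of cells of `S` in which consecutive cells are adjacent. -/
def Conn (S : Finset (ℤ × ℤ)) : Prop :=
  ∀ a ∈ S, ∀ b ∈ S, ∃ (k : ℕ) (f : ℕ → ℤ × ℤ),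
    f 0 = a ∧ f k = b ∧ (∀ i ≤ k, f i ∈ S) ∧ ∀ i < k, Adj (f i) (f (i + 1))
open Finset

def unitSteps : Finset (ℤ × ℤ) := {(1, 0), (-1, 0), (0, 1), (0, -1)}

lemma card_unitSteps : #unitSteps = 4 := by decide

lemma adj_iff_sub_mem_unitSteps {c d : ℤ × ℤ} : Adj c d ↔ d - c ∈ unitSteps := by
  simp only [Adj, unitSteps, mem_insert, mem_singleton, Prod.ext_iff, Prod.fst_sub,
    Prod.snd_sub]
  rcases abs_cases (c.1 - d.1) with ⟨h1, h1'⟩ | ⟨h1, h1'⟩ <;>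
    rcases abs_cases (c.2 - d.2) with ⟨h2, h2'⟩ | ⟨h2, h2'⟩ <;>
      rw [h1, h2] <;> omega

instance : DecidableRel Adj := fun _ _ => inferInstanceAs (Decidable (_ = _))

lemma not_adj_self (c : ℤ × ℤ) : ¬Adj c c := by simp [Adj]

lemma adj_comm {c d : ℤ × ℤ} : Adj c d ↔ Adj d c := by
  simp only [Adj, abs_sub_comm]

/-- The pair `(c, v)` stands for the wall between `c` and `c + v`. -/
def walls (S : Finset (ℤ × ℤ)) : Finset ((ℤ × ℤ) × (ℤ × ℤ)) :=
  {p ∈ S ×ˢ unitSteps | p.1 + p.2 ∉ S}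

lemma perimeter_eq_card_walls (S : Finset (ℤ × ℤ)) : perimeter S = #(walls S) := by
  have hinj : Function.Injective fun p : (ℤ × ℤ) × (ℤ × ℤ) => (p.1, p.1 + p.2) := by
    rintro ⟨a, v⟩ ⟨b, w⟩ h
    simp only [Prod.mk.injEq] at h
    obtain ⟨rfl, h⟩ := h
    rw [add_right_injective a h]
  have hset : {p : (ℤ × ℤ) × (ℤ × ℤ) | p.1 ∈ S ∧ p.2 ∉ S ∧ Adj p.1 p.2} =
      (walls S).image fun p => (p.1, p.1 + p.2) := by
    ext ⟨c, d⟩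
    simp only [walls, adj_iff_sub_mem_unitSteps, Set.mem_ofPred_eq, coe_image, coe_filter,
      mem_product, Set.mem_image, Prod.mk.injEq]
    constructor
    · rintro ⟨hc, hd, hcd⟩
      exact ⟨(c, d - c), by simpa using ⟨⟨hc, hcd⟩, hd⟩, rfl, add_sub_cancel c d⟩
    · rintro ⟨⟨c, v⟩, ⟨⟨hc, hv⟩, hcv⟩, rfl, rfl⟩
      exact ⟨hc, hcv, by simpa using hv⟩
  rw [perimeter, hset, Set.ncard_coe_finset, card_image_of_injective _ hinj]

lemma perimeter_eq_sum_cells (S : Finset (ℤ × ℤ)) :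
    perimeter S = ∑ c ∈ S, #{v ∈ unitSteps | c + v ∉ S} := by
  simp only [perimeter_eq_card_walls, walls, card_filter, sum_product]

lemma perimeter_eq_sum_steps (S : Finset (ℤ × ℤ)) :
    perimeter S = ∑ v ∈ unitSteps, #{c ∈ S | c + v ∉ S} := by
  simp only [perimeter_eq_card_walls, walls, card_filter, sum_product_right]

lemma card_image_le_card_filter_add_notMem {G α β : Type*} [Add G] [LinearOrder α]
    [DecidableEq G] [DecidableEq β] (S : Finset G) {v : G} {f : G → α}
    (hf : ∀ c, f c < f (c + v)) {π : G → β} (hπ : ∀ c, π (c + v) = π c) :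
    #(S.image π) ≤ #{c ∈ S | c + v ∉ S} := by
  -- the `f`-maximal cell of each fibre of `π` has its `v`-neighbour outside `S`
  refine (card_le_card fun y hy => ?_).trans (card_image_le (f := π))
  obtain ⟨c, hc, rfl⟩ := mem_image.mp hy
  obtain ⟨m, hm, hmax⟩ := exists_max_image {d ∈ S | π d = π c} f ⟨c, by simp [hc]⟩
  rw [mem_filter] at hm
  refine mem_image.mpr ⟨m, mem_filter.mpr ⟨hm.1, fun hmv => ?_⟩, hm.2⟩
  exact (hf m).not_ge (hmax _ (mem_filter.mpr ⟨hmv, (hπ m).trans hm.2⟩))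

lemma two_mul_card_image_fst_add_card_image_snd_le_perimeter (S : Finset (ℤ × ℤ)) :
    2 * (#(S.image Prod.fst) + #(S.image Prod.snd)) ≤ perimeter S := by
  rw [perimeter_eq_sum_steps, unitSteps, sum_insert (by decide), sum_insert (by decide),
    sum_insert (by decide), sum_singleton]
  have right := card_image_le_card_filter_add_notMem S (v := (1, 0)) (f := Prod.fst)
    (fun c => by simp) (π := Prod.snd) (fun c => by simp)
  have left := card_image_le_card_filter_add_notMem S (v := (-1, 0)) (f := fun c => -c.1)
    (fun c => by simp) (π := Prod.snd) (fun c => by simp)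
  have up := card_image_le_card_filter_add_notMem S (v := (0, 1)) (f := Prod.snd)
    (fun c => by simp) (π := Prod.fst) (fun c => by simp)
  have down := card_image_le_card_filter_add_notMem S (v := (0, -1)) (f := fun c => -c.2)
    (fun c => by simp) (π := Prod.fst) (fun c => by simp)
  omega

lemma sixteen_mul_card_le_perimeter_sq (S : Finset (ℤ × ℤ)) : 16 * #S ≤ perimeter S ^ 2 := by
  have hS : #S ≤ #(S.image Prod.fst) * #(S.image Prod.snd) :=
    (card_le_card subset_product).trans_eq (card_product _ _)
  have hP := two_mul_card_image_fst_add_card_image_snd_le_perimeter S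
  nlinarith [sq_nonneg ((#(S.image Prod.fst) : ℤ) - #(S.image Prod.snd))]

lemma card_filter_add_notMem_add_card_adj_eq_four (S : Finset (ℤ × ℤ)) (c : ℤ × ℤ) :
    #{v ∈ unitSteps | c + v ∉ S} + #{d ∈ S | Adj c d} = 4 := by
  have hnbr : {d ∈ S | Adj c d} = {v ∈ unitSteps | c + v ∈ S}.image (c + ·) := by
    ext d
    simp only [mem_filter, mem_image, adj_iff_sub_mem_unitSteps]
    constructor
    · rintro ⟨hd, hcd⟩
      exact ⟨d - c, ⟨hcd, by simpa using hd⟩, add_sub_cancel c d⟩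
    · rintro ⟨v, ⟨hv, hcv⟩, rfl⟩
      exact ⟨hcv, by simpa using hv⟩
  rw [hnbr, card_image_of_injective _ (add_right_injective c), add_comm,
    card_filter_add_card_filter_not, card_unitSteps]

lemma perimeter_add_sum_card_adj (S : Finset (ℤ × ℤ)) :
    perimeter S + ∑ c ∈ S, #{d ∈ S | Adj c d} = 4 * #S := by
  rw [perimeter_eq_sum_cells, ← sum_add_distrib,
    sum_congr rfl fun c _ => card_filter_add_notMem_add_card_adj_eq_four S c, sum_const,
    smul_eq_mul, mul_comm]

lemma perimeter_empty : perimeter ∅ = 0 := by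
  simpa using perimeter_add_sum_card_adj ∅

lemma perimeter_singleton (c : ℤ × ℤ) : perimeter {c} = 4 := by
  simpa [filter_singleton, not_adj_self] using perimeter_add_sum_card_adj {c}

lemma perimeter_pair {c d : ℤ × ℤ} (h : c ≠ d) :
    perimeter {c, d} = if Adj c d then 6 else 8 := by
  have key := perimeter_add_sum_card_adj {c, d}
  rw [sum_pair h, card_pair h] at key
  split_ifs with hcd
  · simp [filter_insert, filter_singleton, not_adj_self, hcd, adj_comm.mp hcd] at key
    omega
  · simp [filter_insert, filter_singleton, not_adj_self, hcd, mt adj_comm.mp hcd] at key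
    omega

theorem perimeter_eq_six_iff_domino_general (S : Finset (ℤ × ℤ)) :
    perimeter S = 6 ↔ ∃ c d : ℤ × ℤ, Adj c d ∧ S = {c, d} := by
  constructor
  · intro h6
    have hcard : #S ≤ 2 := by
      have := sixteen_mul_card_le_perimeter_sq S
      rw [h6] at this
      omega
    interval_cases hS : #S
    · rw [card_eq_zero.mp hS, perimeter_empty] at h6
      omega
    · obtain ⟨c, rfl⟩ := card_eq_one.mp hS
      rw [perimeter_singleton] at h6
      omega
    · obtain ⟨c, d, hcd, rfl⟩ := card_eq_two.mp hS
      rw [perimeter_pair hcd] at h6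
      split_ifs at h6 with hadj
      exacts [⟨c, d, hadj, rfl⟩, absurd h6 (by decide)]
  · rintro ⟨c, d, hadj, rfl⟩
    have hcd : c ≠ d := by
      rintro rfl
      exact not_adj_self c hadj
    rw [perimeter_pair hcd, if_pos hadj]

/-- A finite nonempty connected set has perimeter 6 iff it
consists of exactly two adjacent cells (a domino). -/
theorem perimeter_eq_six_iff_domino (S : Finset (ℤ × ℤ)) (hS : S.Nonempty)
    (hconn : Conn S) :
    perimeter S = 6 ↔ ∃ c d : ℤ × ℤ, Adj c d ∧ S = {c, d} :=
  perimeter_eq_six_iff_domino_general S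
end
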